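/- arXiv:2510.15475 — 2 statements merged into one kernel-verified Lean document; each statement's English description precedes it below -/
import Mathlib

section
/- Let ζ < 0 and define φ(z) = (e^z − 1)/z for z ≠ 0, φ(0) = 1. If η ≥ 2/|ζ|, then for all λ ≤ 0, φ(ηλ)(λ + ζ) ∈ [ζ, 0]. -/
/-- The first exponential-integrator function φ(z) = (e^z − 1)/z, φ(0) = 1. -/
noncomputable def phi (z : ℝ) : ℝ := if z = 0 then 1 else (Real.exp z - 1) / z

/-!
Write z = ηλ. Since λ φ(ηλ) = (e^z − 1)/η and, by convexity of exp (Hermite–Hadamard applied to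
φ(z) = ∫₀¹ e^{tz} dt), φ(z) ≤ (1 + e^z)/2, we get
φ(z)(λ + ζ) − ζ ≥ (e^z − 1)/η + ζ(e^z − 1)/2 = (e^z − 1)(1/η + ζ/2) ≥ 0,
both factors being nonpositive once η ≥ 2/|ζ|. The upper bound holds because φ > 0 and λ + ζ < 0.
-/

open Real

lemma phi_pos (z : ℝ) : 0 < phi z := by
  unfold phi
  split_ifs with hz
  · exact one_pos
  rcases lt_or_gt_of_ne hz with hneg | hpos
  · exact div_pos_of_neg_of_neg (by linarith [exp_lt_one_iff.mpr hneg]) hneg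
  · exact div_pos (by linarith [add_one_lt_exp hz]) hpos

lemma mul_phi_mul {η : ℝ} (hη : η ≠ 0) (x : ℝ) : x * phi (η * x) = (exp (η * x) - 1) / η := by
  unfold phi
  split_ifs with h
  · obtain rfl : x = 0 := (mul_eq_zero.mp h).resolve_left hη
    simp
  · have hx : x ≠ 0 := right_ne_zero_of_mul h
    field_simp

lemma one_sub_mul_exp_le (x : ℝ) : (1 - x) * exp x ≤ 1 :=
  calc (1 - x) * exp x ≤ exp (-x) * exp x :=
        mul_le_mul_of_nonneg_right (by linarith [add_one_le_exp (-x)]) (exp_pos x).le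
    _ = 1 := by rw [← exp_add, neg_add_cancel, exp_zero]

-- `(z - 2) e^z + z + 2 = 2z ((1 + e^z)/2 - φ z)`, so this is the Hermite–Hadamard bound in disguise.
lemma monotone_sub_two_mul_exp_add_add_two : Monotone fun z : ℝ => (z - 2) * exp z + z + 2 := by
  have hderiv (z : ℝ) :
      HasDerivAt (fun z : ℝ => (z - 2) * exp z + z + 2) (exp z + (z - 2) * exp z + 1) z :=
    ((((hasDerivAt_id z).sub_const 2).mul (hasDerivAt_exp z)).add (hasDerivAt_id z)).add_const 2
      |>.congr_deriv (by simp)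
  refine monotone_of_deriv_nonneg (fun z => (hderiv z).differentiableAt) fun z => ?_
  rw [(hderiv z).deriv]
  linarith [one_sub_mul_exp_le z]

lemma phi_le_one_add_exp_div_two (z : ℝ) : phi z ≤ (1 + exp z) / 2 := by
  unfold phi
  split_ifs with hz
  · simp [hz]
  rcases lt_or_gt_of_ne hz with hneg | hpos
  · have := monotone_sub_two_mul_exp_add_add_two hneg.le
    simp only [exp_zero] at this
    rw [div_le_iff_of_neg hneg]
    nlinarith
  · have := monotone_sub_two_mul_exp_add_add_two hpos.le
    simp only [exp_zero] at this
    rw [div_le_iff₀ hpos]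
    nlinarith

theorem stmt_8 (ζ : ℝ) (hζ : ζ < 0) (η : ℝ) (hη : 2 / |ζ| ≤ η) (lam : ℝ) (hlam : lam ≤ 0) :
    phi (η * lam) * (lam + ζ) ∈ Set.Icc ζ 0 := by
  rw [abs_of_neg hζ] at hη
  have hηpos : 0 < η := lt_of_lt_of_le (div_pos two_pos (neg_pos.mpr hζ)) hη
  have hinv_le : 1 / η + ζ / 2 ≤ 0 := by
    rw [div_le_iff₀ (neg_pos.mpr hζ)] at hη
    rw [div_add_div _ _ hηpos.ne' two_ne_zero, div_nonpos_iff]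
    right
    constructor <;> nlinarith
  have hexp : exp (η * lam) - 1 ≤ 0 := by
    linarith [exp_le_one_iff.mpr (mul_nonpos_of_nonneg_of_nonpos hηpos.le hlam)]
  have hφ := phi_le_one_add_exp_div_two (η * lam)
  constructor
  · calc ζ ≤ (exp (η * lam) - 1) / η + ζ * ((1 + exp (η * lam)) / 2) := by
          have hfactor : (exp (η * lam) - 1) / η + ζ * ((1 + exp (η * lam)) / 2) - ζ
              = (exp (η * lam) - 1) * (1 / η + ζ / 2) := by ring
          linarith [mul_nonneg_of_nonpos_of_nonpos hexp hinv_le]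
      _ ≤ lam * phi (η * lam) + ζ * phi (η * lam) := by
          rw [mul_phi_mul hηpos.ne']
          linarith [mul_le_mul_of_nonpos_left hφ hζ.le]
      _ = phi (η * lam) * (lam + ζ) := by ring
  · exact mul_nonpos_of_nonneg_of_nonpos (phi_pos _).le (by linarith)
end

section
/- For every integer m ≥ 2 and every ε > 0, with ω₀ = 1 + ε/m², the quantity α_m(ε) = T_m(ω₀)T_m''(ω₀)/T_m'(ω₀)² satisfies (1/3)·(m² − 1)/m² < α_m(ε) < (1/tanh(√(2ε)))·(1/tanh(√(2ε)) − 1/√(2ε)). -/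
/-!
Put `1 + ε / m ^ 2 = cosh t` with `t > 0` and `u = m t`. Then `T_m = cosh (m t)`,
`T_m' · sinh t = m sinh (m t)`, and the Chebyshev equation `(1 - x²) T'' = x T' - m² T` gives `T_m''`,
so `α = coth u (coth u - coth t / m)`; with `φ x = x coth x` this is `φ u (φ u - φ t) / u²`.

Lower bound: `φ u (φ u - φ t) ≥ (φ u ² - φ t ²) / 2 > (u² - t²) / 3`, because `φ x ² - 2 x² / 3`
is increasing. Upper bound: `φ t > 1` gives `α < coth u (coth u - 1 / u)`, which is increasing in `u`,
and `u < √(2ε)` since `cosh t - 1 = ε / m² > t² / 2`. Both monotonicity statements come down to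
`x + x³ / 6 ≤ sinh x` and `sinh x < x cosh x < (1 + x² / 3) sinh x`.
-/

open Real Polynomial Polynomial.Chebyshev

lemma pos_of_hasDerivAt_pos {f f' : ℝ → ℝ} (hf : ∀ x, HasDerivAt f (f' x) x) (h0 : f 0 = 0)
    (hf' : ∀ x, 0 < x → 0 < f' x) {x : ℝ} (hx : 0 < x) : 0 < f x := by
  have hmono : StrictMonoOn f (Set.Ici 0) := by
    refine strictMonoOn_of_hasDerivWithinAt_pos (convex_Ici 0)
      (fun y _ => (hf y).continuousAt.continuousWithinAt) (fun y _ => (hf y).hasDerivWithinAt) ?_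
    rw [interior_Ici]
    exact hf'
  simpa [h0] using hmono Set.self_mem_Ici hx.le hx

lemma strictMonoOn_Ioi_of_hasDerivAt_pos {f f' : ℝ → ℝ} (hf : ∀ x, 0 < x → HasDerivAt f (f' x) x)
    (hf' : ∀ x, 0 < x → 0 < f' x) : StrictMonoOn f (Set.Ioi 0) := by
  refine strictMonoOn_of_hasDerivWithinAt_pos (f' := f') (convex_Ioi 0)
    (fun x hx => (hf x hx).continuousAt.continuousWithinAt) ?_ ?_ <;> rw [interior_Ioi]
  · exact fun x hx => (hf x hx).hasDerivWithinAt
  · exact hf'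

namespace Real

lemma add_cube_div_six_le_sinh {x : ℝ} (hx : 0 ≤ x) : x + x ^ 3 / 6 ≤ sinh x := by
  have := sum_le_hasSum (Finset.range 2) (fun n _ => by positivity) (hasSum_sinh x)
  norm_num [Finset.sum_range_succ, Nat.factorial] at this
  exact this

lemma one_add_sq_div_two_add_pow_four_div_le_cosh (x : ℝ) :
    1 + x ^ 2 / 2 + x ^ 4 / 24 ≤ cosh x := by
  have := sum_le_hasSum (Finset.range 3)
    (fun n _ => div_nonneg (pow_mul x 2 n ▸ by positivity) (by positivity)) (hasSum_cosh x)
  norm_num [Finset.sum_range_succ, Nat.factorial] at this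
  linarith

lemma sinh_lt_mul_cosh {x : ℝ} (hx : 0 < x) : sinh x < x * cosh x := by
  have key := pos_of_hasDerivAt_pos (f := fun x => x * cosh x - sinh x) (f' := fun x => x * sinh x)
    (fun x => (((hasDerivAt_id' x).mul (hasDerivAt_cosh x)).sub (hasDerivAt_sinh x)).congr_deriv
      (by ring))
    (by simp) (fun x hx => mul_pos hx (sinh_pos_iff.2 hx)) hx
  simpa using key

lemma mul_cosh_lt_sinh {x : ℝ} (hx : 0 < x) : x * cosh x < (1 + x ^ 2 / 3) * sinh x := by
  have key := pos_of_hasDerivAt_pos (f := fun x => (1 + x ^ 2 / 3) * sinh x - x * cosh x)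
    (f' := fun x => x / 3 * (x * cosh x - sinh x))
    (fun x => (((((hasDerivAt_pow 2 x).div_const 3).const_add 1).mul (hasDerivAt_sinh x)).sub
        ((hasDerivAt_id' x).mul (hasDerivAt_cosh x))).congr_deriv (by push_cast; ring))
    (by simp) (fun x hx => mul_pos (by positivity) (sub_pos.2 (sinh_lt_mul_cosh hx))) hx
  simpa using key

noncomputable def coth (x : ℝ) : ℝ := cosh x / sinh x

lemma one_div_tanh (x : ℝ) : 1 / tanh x = coth x := by
  rw [tanh_eq_sinh_div_cosh, one_div_div, coth]

lemma coth_pos {x : ℝ} (hx : 0 < x) : 0 < coth x :=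
  div_pos (cosh_pos x) (sinh_pos_iff.2 hx)

lemma hasDerivAt_coth {x : ℝ} (hx : x ≠ 0) : HasDerivAt coth (-1 / sinh x ^ 2) x := by
  have hs : sinh x ≠ 0 := sinh_ne_zero.2 hx
  refine ((hasDerivAt_cosh x).div (hasDerivAt_sinh x) hs).congr_deriv ?_
  rw [← cosh_sq_sub_sinh_sq x]
  ring

lemma one_lt_mul_coth {x : ℝ} (hx : 0 < x) : 1 < x * coth x := by
  rw [coth, mul_div_assoc', one_lt_div (sinh_pos_iff.2 hx)]
  exact sinh_lt_mul_cosh hx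

lemma mul_coth_lt {x : ℝ} (hx : 0 < x) : x * coth x < 1 + x ^ 2 / 3 := by
  rw [coth, mul_div_assoc', div_lt_iff₀ (sinh_pos_iff.2 hx)]
  exact mul_cosh_lt_sinh hx

lemma strictMonoOn_sq_mul_coth_sub :
    StrictMonoOn (fun x => (x * coth x) ^ 2 - 2 * x ^ 2 / 3) (Set.Ioi 0) := by
  refine strictMonoOn_Ioi_of_hasDerivAt_pos
    (f' := fun x => 2 * x * (sinh x + sinh x ^ 3 / 3 - x * cosh x) / sinh x ^ 3)
    (fun x hx => ((((hasDerivAt_id' x).mul (hasDerivAt_coth hx.ne')).pow 2).sub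
      (((hasDerivAt_pow 2 x).const_mul 2).div_const 3)).congr_deriv ?_) fun x hx => ?_
  · have hs : sinh x ≠ 0 := sinh_ne_zero.2 hx.ne'
    simp only [coth, Pi.mul_apply, Nat.cast_ofNat, Nat.add_one_sub_one, pow_one, one_mul]
    field_simp
    linear_combination (3 * sinh x) * cosh_sq x
  · have hs := sinh_pos_iff.2 hx
    have hxs : x ^ 2 * sinh x < sinh x ^ 3 := by
      have : x ^ 2 < sinh x ^ 2 := pow_lt_pow_left₀ (self_lt_sinh_iff.2 hx) hx.le two_ne_zero
      nlinarith
    have := mul_cosh_lt_sinh hx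
    refine div_pos (mul_pos (by positivity) ?_) (by positivity)
    nlinarith

lemma strictMonoOn_coth_mul_coth_sub_inv :
    StrictMonoOn (fun x => coth x * (coth x - 1 / x)) (Set.Ioi 0) := by
  refine strictMonoOn_Ioi_of_hasDerivAt_pos
    (f' := fun x => (sinh x ^ 2 * cosh x + x * sinh x - 2 * x ^ 2 * cosh x) / (x ^ 2 * sinh x ^ 3))
    (fun x hx => ((hasDerivAt_coth hx.ne').mul ((hasDerivAt_coth hx.ne').sub
      ((hasDerivAt_const x 1).div (hasDerivAt_id' x) hx.ne'))).congr_deriv ?_) fun x hx => ?_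
  · have hs : sinh x ≠ 0 := sinh_ne_zero.2 hx.ne'
    simp only [coth, Pi.sub_apply, Pi.div_apply]
    field_simp
    ring
  · have hs := sinh_pos_iff.2 hx
    have hc := cosh_pos x
    have hsq : x ^ 2 * (1 + x ^ 2 / 3) ≤ sinh x ^ 2 := by
      have := pow_le_pow_left₀ (by positivity) (add_cube_div_six_le_sinh hx.le) 2
      nlinarith [pow_pos hx 6]
    have hxc : x ^ 2 * cosh x < x * (1 + x ^ 2 / 3) * sinh x := by
      nlinarith [mul_cosh_lt_sinh hx]
    refine div_pos ?_ (by positivity)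
    have key : x ^ 2 * cosh x * (x ^ 2 / 3) ^ 2 <
        (1 + x ^ 2 / 3) * (sinh x ^ 2 * cosh x + x * sinh x - 2 * x ^ 2 * cosh x) := by
      have hpos : 0 < (1 + x ^ 2 / 3) * cosh x := by positivity
      nlinarith [mul_le_mul_of_nonneg_right hsq hpos.le]
    nlinarith [mul_nonneg (mul_nonneg (sq_nonneg x) hc.le) (sq_nonneg (x ^ 2 / 3))]

lemma sq_sub_sq_div_three_lt_mul_coth_mul_sub {t u : ℝ} (ht : 0 < t) (htu : t < u) :
    (u ^ 2 - t ^ 2) / 3 < u * coth u * (u * coth u - t * coth t) := by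
  have h := strictMonoOn_sq_mul_coth_sub ht (ht.trans htu) htu
  simp only at h
  -- a (a - b) = (a ^ 2 - b ^ 2) / 2 + (a - b) ^ 2 / 2
  nlinarith [sq_nonneg (u * coth u - t * coth t)]

lemma lt_coth_mul_mul_sub_coth_div {m t : ℝ} (hm : 1 < m) (ht : 0 < t) :
    1 / 3 * (m ^ 2 - 1) / m ^ 2 < coth (m * t) * (coth (m * t) - coth t / m) := by
  have hu : 0 < m * t := by positivity
  have key := sq_sub_sq_div_three_lt_mul_coth_mul_sub ht (lt_mul_of_one_lt_left ht hm)
  have e1 : 1 / 3 * (m ^ 2 - 1) / m ^ 2 = ((m * t) ^ 2 - t ^ 2) / 3 / (m * t) ^ 2 := by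
    field_simp
  have e2 : coth (m * t) * (coth (m * t) - coth t / m) =
      m * t * coth (m * t) * (m * t * coth (m * t) - t * coth t) / (m * t) ^ 2 := by
    field_simp
  rw [e1, e2]
  exact div_lt_div_of_pos_right key (by positivity)

lemma coth_mul_mul_sub_coth_div_lt {m t s : ℝ} (hm : 0 < m) (ht : 0 < t) (hs : m * t < s) :
    coth (m * t) * (coth (m * t) - coth t / m) < coth s * (coth s - 1 / s) := by
  have hu : 0 < m * t := by positivity
  have hinv : 1 / (m * t) < coth t / m := by
    rw [div_lt_div_iff₀ hu hm]
    nlinarith [one_lt_mul_coth ht]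
  calc coth (m * t) * (coth (m * t) - coth t / m)
      < coth (m * t) * (coth (m * t) - 1 / (m * t)) := by gcongr; exact coth_pos hu
    _ < coth s * (coth s - 1 / s) := strictMonoOn_coth_mul_coth_sub_inv hu (hu.trans hs) hs

end Real

namespace Polynomial.Chebyshev

lemma derivative_T_eval_cosh_mul_sinh (n : ℤ) (t : ℝ) :
    (derivative (T ℝ n)).eval (cosh t) * sinh t = n * sinh (n * t) := by
  rw [T_derivative_eq_U, eval_mul, eval_intCast, mul_assoc, U_real_cosh]
  push_cast
  ring_nf

lemma derivative_derivative_T_eval_cosh_mul_sinh_sq (n : ℤ) (t : ℝ) :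
    (derivative (derivative (T ℝ n))).eval (cosh t) * sinh t ^ 2 =
      n ^ 2 * cosh (n * t) - cosh t * (derivative (T ℝ n)).eval (cosh t) := by
  have h := congrArg (eval (cosh t))
    (one_sub_X_sq_mul_derivative_derivative_T_eq_poly_in_T (R := ℝ) n)
  simp only [Function.iterate_succ, Function.iterate_zero, Function.comp_apply, id_eq, eval_mul,
    eval_sub, eval_one, eval_pow, eval_X, eval_intCast, T_real_cosh] at h
  linear_combination -h - (derivative (derivative (T ℝ n))).eval (cosh t) * cosh_sq t

lemma T_mul_derivative_derivative_div_sq_eval_cosh (n : ℤ) (hn : n ≠ 0) {t : ℝ} (ht : t ≠ 0) :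
    (T ℝ n).eval (cosh t) * (derivative (derivative (T ℝ n))).eval (cosh t) /
        ((derivative (T ℝ n)).eval (cosh t)) ^ 2 =
      coth (n * t) * (coth (n * t) - coth t / n) := by
  have hn' : (n : ℝ) ≠ 0 := Int.cast_ne_zero.2 hn
  have hs : sinh t ≠ 0 := sinh_ne_zero.2 ht
  have hsn : sinh (n * t) ≠ 0 := sinh_ne_zero.2 (mul_ne_zero hn' ht)
  have h1 := derivative_T_eval_cosh_mul_sinh n t
  have h2 := derivative_derivative_T_eval_cosh_mul_sinh_sq n t
  rw [← eq_div_iff hs] at h1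
  rw [h1, ← eq_div_iff (pow_ne_zero 2 hs)] at h2
  rw [h1, h2, T_real_cosh, coth, coth]
  field_simp

end Polynomial.Chebyshev

theorem stmt_17 (m : ℕ) (hm : 2 ≤ m) (ε : ℝ) (hε : 0 < ε) :
    1 / 3 * ((m : ℝ) ^ 2 - 1) / (m : ℝ) ^ 2 <
        (T ℝ m).eval (1 + ε / (m : ℝ) ^ 2) *
            (derivative (derivative (T ℝ m))).eval (1 + ε / (m : ℝ) ^ 2) /
          ((derivative (T ℝ m)).eval (1 + ε / (m : ℝ) ^ 2)) ^ 2 ∧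
      (T ℝ m).eval (1 + ε / (m : ℝ) ^ 2) *
            (derivative (derivative (T ℝ m))).eval (1 + ε / (m : ℝ) ^ 2) /
          ((derivative (T ℝ m)).eval (1 + ε / (m : ℝ) ^ 2)) ^ 2 <
        (1 / Real.tanh (Real.sqrt (2 * ε))) *
          (1 / Real.tanh (Real.sqrt (2 * ε)) - 1 / Real.sqrt (2 * ε)) := by
  have hm' : (1 : ℝ) < m := by exact_mod_cast hm
  have hx : 1 < 1 + ε / (m : ℝ) ^ 2 := lt_add_of_pos_right 1 (by positivity)
  set t := arcosh (1 + ε / (m : ℝ) ^ 2)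
  have ht : 0 < t := arcosh_pos hx
  have hcosh : cosh t = 1 + ε / (m : ℝ) ^ 2 := cosh_arcosh hx.le
  have hmt : m * t < √(2 * ε) := by
    have hquartic := one_add_sq_div_two_add_pow_four_div_le_cosh t
    have ht2 : t ^ 2 < 2 * (ε / (m : ℝ) ^ 2) := by nlinarith [pow_pos ht 4]
    rw [lt_sqrt (by positivity), mul_pow]
    calc (m : ℝ) ^ 2 * t ^ 2 < m ^ 2 * (2 * (ε / (m : ℝ) ^ 2)) := by gcongr
      _ = 2 * ε := by field_simp
  rw [← hcosh, T_mul_derivative_derivative_div_sq_eval_cosh m (by omega) ht.ne', one_div_tanh]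
  push_cast
  exact ⟨lt_coth_mul_mul_sub_coth_div hm' ht, coth_mul_mul_sub_coth_div_lt (by linarith) ht hmt⟩
end
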